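/- 20·√(2/π)·∫_{-∞}^{∞} e^{-2x²}·((1+erf(x))/2)³ dx = 10·(1 - (3/(2π))·arcsec(3)). -/

import Mathlib

/-!
Expanding the cube, the odd powers of `erf` integrate to zero against the even weight
`exp (-2 x²)` and the constant term is a Gaussian integral. The square term is obtained by
differentiating `Φ t = ∫ exp (-a x²) erf x erf (t x) dx` in `t`: an integration by parts turns
`Φ' t` into a Gaussian integral, and `Φ'` has the elementary antiderivative
`2 / √(π a) · arctan (t / (√a √(a + t² + 1)))`.
-/

open Real MeasureTheory

/-- The error function. -/
noncomputable def erf (x : ℝ) : ℝ :=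
  2 / Real.sqrt π * ∫ t in (0:ℝ)..x, Real.exp (-t^2)

open Filter

lemma Function.Odd.integral_eq_zero {G E : Type*} [MeasurableSpace G] [AddGroup G]
    [MeasurableNeg G] [NormedAddCommGroup E] [NormedSpace ℝ E] (μ : Measure G) [μ.IsNegInvariant]
    {f : G → E} (hf : Function.Odd f) : ∫ x, f x ∂μ = 0 := by
  have h := integral_neg_eq_self f μ
  simp only [hf.eq, integral_neg] at h
  have h2 : (2 : ℝ) • ∫ x, f x ∂μ = 0 := by
    rw [two_smul]
    nth_rewrite 1 [← h]
    exact neg_add_cancel _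
  exact (smul_eq_zero.mp h2).resolve_left two_ne_zero

lemma hasDerivAt_erf (x : ℝ) : HasDerivAt erf (2 / √π * exp (-x ^ 2)) x := by
  have hc : Continuous fun t : ℝ => exp (-t ^ 2) := by fun_prop
  exact (intervalIntegral.integral_hasDerivAt_right (hc.intervalIntegrable _ _)
    (hc.stronglyMeasurableAtFilter _ _) hc.continuousAt).const_mul _

@[fun_prop]
lemma continuous_erf : Continuous erf :=
  continuous_iff_continuousAt.2 fun x => (hasDerivAt_erf x).continuousAt

@[simp]
lemma erf_zero : erf 0 = 0 := by
  simp [erf]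

lemma erf_neg (x : ℝ) : erf (-x) = -erf x := by
  have h := intervalIntegral.integral_comp_neg (a := 0) (b := x) fun t => exp (-t ^ 2)
  simp only [neg_sq, neg_zero] at h
  rw [erf, erf, intervalIntegral.integral_symm, ← h, mul_neg]

lemma abs_erf_le_one (x : ℝ) : |erf x| ≤ 1 := by
  wlog hx : 0 ≤ x generalizing x
  · simpa [erf_neg] using this (-x) (by linarith)
  have hnonneg : 0 ≤ ∫ t in (0:ℝ)..x, exp (-t ^ 2) :=
    intervalIntegral.integral_nonneg hx fun t _ => (exp_pos _).le
  have hle : ∫ t in (0:ℝ)..x, exp (-t ^ 2) ≤ √π / 2 := by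
    have hhalf := integral_gaussian_Ioi 1
    simp only [neg_mul, one_mul, div_one] at hhalf
    rw [intervalIntegral.integral_of_le hx, ← hhalf]
    exact setIntegral_mono_set (by simpa using (integrable_exp_neg_mul_sq one_pos).integrableOn)
      (Eventually.of_forall fun t => (exp_pos _).le) Set.Ioc_subset_Ioi_self.eventuallyLE
  rw [erf, abs_of_nonneg (by positivity), div_mul_eq_mul_div, div_le_one (by positivity)]
  linarith

lemma integrable_exp_neg_mul_sq_mul_erf_pow {a : ℝ} (ha : 0 < a) (n : ℕ) :
    Integrable fun x => exp (-a * x ^ 2) * erf x ^ n :=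
  (integrable_exp_neg_mul_sq ha).mul_bdd (continuous_erf.pow n).aestronglyMeasurable
    (Eventually.of_forall fun x => by
      simpa [norm_pow] using pow_le_one₀ (abs_nonneg _) (abs_erf_le_one x))

lemma integral_exp_neg_mul_sq_mul_erf_pow_of_odd (a : ℝ) {n : ℕ} (hn : Odd n) :
    ∫ x, exp (-a * x ^ 2) * erf x ^ n = 0 :=
  Function.Odd.integral_eq_zero volume fun x => by simp [erf_neg, hn.neg_pow]

lemma integral_erf_mul_mul_exp_neg_mul_sq {b : ℝ} (hb : 0 < b) :
    ∫ x, erf x * (x * exp (-b * x ^ 2)) = 1 / (b * √(b + 1)) := by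
  have hv (x : ℝ) :
      HasDerivAt (fun x => -(2 * b)⁻¹ * exp (-b * x ^ 2)) (x * exp (-b * x ^ 2)) x := by
    refine ((((hasDerivAt_pow 2 x).const_mul (-b)).exp).const_mul (-(2 * b)⁻¹)).congr_deriv ?_
    field_simp
    ring
  have hprod (x : ℝ) : 2 / √π * exp (-x ^ 2) * (-(2 * b)⁻¹ * exp (-b * x ^ 2))
      = -(1 / (b * √π)) * exp (-(b + 1) * x ^ 2) := by
    rw [show -(b + 1) * x ^ 2 = -x ^ 2 + -b * x ^ 2 by ring, exp_add]
    field_simp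
  have hbdd : ∀ᵐ x ∂volume, ‖erf x‖ ≤ 1 := ae_of_all _ abs_erf_le_one
  rw [integral_mul_deriv_eq_deriv_mul_of_integrable (fun x _ => hasDerivAt_erf x)
      (fun x _ => hv x) ((integrable_mul_exp_neg_mul_sq hb).bdd_mul
        continuous_erf.aestronglyMeasurable hbdd)
      (by simpa only [Pi.mul_def, hprod] using
        (integrable_exp_neg_mul_sq (by linarith)).const_mul _)
      (((integrable_exp_neg_mul_sq hb).const_mul _).bdd_mul
        continuous_erf.aestronglyMeasurable hbdd)]
  simp only [hprod, integral_const_mul, integral_gaussian, sqrt_div' _ (by linarith : 0 ≤ b + 1)]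
  field_simp

lemma hasDerivAt_integral_exp_neg_mul_sq_mul_erf_mul_erf {a : ℝ} (ha : 0 < a) (t : ℝ) :
    HasDerivAt (fun t => ∫ x, exp (-a * x ^ 2) * erf x * erf (t * x))
      (2 / √π / ((a + t ^ 2) * √(a + t ^ 2 + 1))) t := by
  have hF' (s x : ℝ) : HasDerivAt (fun s => exp (-a * x ^ 2) * erf x * erf (s * x))
      (exp (-a * x ^ 2) * erf x * (2 / √π * exp (-(s * x) ^ 2) * x)) s :=
    ((hasDerivAt_erf (s * x)).comp s (hasDerivAt_mul_const x)).const_mul _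
  have hbound (s x : ℝ) :
      ‖exp (-a * x ^ 2) * erf x * (2 / √π * exp (-(s * x) ^ 2) * x)‖
        ≤ 2 / √π * ‖x * exp (-a * x ^ 2)‖ := calc
    _ = 2 / √π * (|erf x| * exp (-(s * x) ^ 2)) * ‖x * exp (-a * x ^ 2)‖ := by
      simp only [norm_mul, norm_div, Real.norm_eq_abs, abs_exp, abs_two,
        abs_of_nonneg (sqrt_nonneg π)]
      ring
    _ ≤ 2 / √π * (1 * 1) * ‖x * exp (-a * x ^ 2)‖ := by
      gcongr
      · exact abs_erf_le_one x
      · exact exp_le_one_iff.2 (neg_nonpos.2 (sq_nonneg _))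
    _ = 2 / √π * ‖x * exp (-a * x ^ 2)‖ := by ring
  have hint : Integrable fun x => exp (-a * x ^ 2) * erf x * erf (t * x) :=
    ((integrable_exp_neg_mul_sq ha).mul_bdd continuous_erf.aestronglyMeasurable
      (ae_of_all _ abs_erf_le_one)).mul_bdd (by fun_prop : Continuous _).aestronglyMeasurable
      (ae_of_all _ fun x => abs_erf_le_one _)
  obtain ⟨-, hderiv⟩ := hasDerivAt_integral_of_dominated_loc_of_deriv_le (x₀ := t) univ_mem
    (Eventually.of_forall fun s => (by fun_prop : Continuous _).aestronglyMeasurable) hint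
    (by fun_prop : Continuous _).aestronglyMeasurable (ae_of_all _ fun x s _ => hbound s x)
    ((integrable_mul_exp_neg_mul_sq ha).norm.const_mul _) (ae_of_all _ fun x s _ => hF' s x)
  have hinner : ∫ x, exp (-a * x ^ 2) * erf x * (2 / √π * exp (-(t * x) ^ 2) * x)
      = 2 / √π * ∫ x, erf x * (x * exp (-(a + t ^ 2) * x ^ 2)) := by
    rw [← integral_const_mul]
    congr 1 with x
    rw [show -(a + t ^ 2) * x ^ 2 = -a * x ^ 2 + -(t * x) ^ 2 by ring, exp_add]
    ring
  rw [hinner, integral_erf_mul_mul_exp_neg_mul_sq (by positivity)] at hderiv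
  exact hderiv.congr_deriv (by ring)

lemma hasDerivAt_arctan_div_sqrt_mul_sqrt {a : ℝ} (ha : 0 < a) (t : ℝ) :
    HasDerivAt (fun t => arctan (t / (√a * √(a + t ^ 2 + 1))))
      (√a / ((a + t ^ 2) * √(a + t ^ 2 + 1))) t := by
  have hs2 : √(a + t ^ 2 + 1) ^ 2 = a + t ^ 2 + 1 := sq_sqrt (by positivity)
  have ha2 : √a ^ 2 = a := sq_sqrt ha.le
  have hsqrt := (((hasDerivAt_pow 2 t).const_add a).add_const 1).sqrt (by positivity)
  have hquot := (hasDerivAt_id t).div (hsqrt.const_mul √a) (by positivity)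
  refine (hquot.arctan).congr_deriv ?_
  simp only [Pi.div_apply, id, Nat.cast_ofNat, pow_one, Nat.add_one_sub_one]
  field_simp
  rw [hs2, ha2]
  ring

lemma integral_exp_neg_mul_sq_mul_erf_sq {a : ℝ} (ha : 0 < a) :
    ∫ x, exp (-a * x ^ 2) * erf x ^ 2 = 2 / √(π * a) * arctan (1 / √(a * (a + 2))) := by
  have hG (t : ℝ) :
      HasDerivAt (fun t => 2 / √(π * a) * arctan (t / (√a * √(a + t ^ 2 + 1))))
        (2 / √π / ((a + t ^ 2) * √(a + t ^ 2 + 1))) t := by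
    refine ((hasDerivAt_arctan_div_sqrt_mul_sqrt ha t).const_mul _).congr_deriv ?_
    rw [sqrt_mul pi_pos.le]
    field_simp
  have hdiff (t : ℝ) := (hasDerivAt_integral_exp_neg_mul_sq_mul_erf_mul_erf ha t).sub (hG t)
  have hconst := is_const_of_deriv_eq_zero (fun t => (hdiff t).differentiableAt)
    (fun t => (hdiff t).deriv.trans (sub_self _)) 1 0
  simp only [Pi.sub_apply, one_mul, zero_mul, erf_zero, mul_zero, integral_zero, zero_div,
    arctan_zero, sub_zero, sub_eq_zero] at hconst
  simp only [sq (erf _), ← mul_assoc, hconst]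
  rw [one_pow, add_assoc, one_add_one_eq_two, sqrt_mul ha.le]

lemma arctan_one_div_sqrt_eight : arctan (1 / √8) = arcsin (1 / 3) := by
  have h8 : √8 ^ 2 = 8 := sq_sqrt (by norm_num)
  have h9 : 1 + (1 / √8) ^ 2 = (3 / √8) ^ 2 := by
    field_simp
    linarith
  rw [arctan_eq_arcsin, h9, sqrt_sq (by positivity)]
  field_simp

theorem stmt_12 :
    20 * Real.sqrt (2/π) *
        (∫ x : ℝ, Real.exp (-2 * x^2) * ((1 + erf x) / 2) ^ 3)
      = 10 * (1 - 3 / (2*π) * Real.arccos (1/3)) := by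
  have hcube (x : ℝ) : exp (-2 * x ^ 2) * ((1 + erf x) / 2) ^ 3
      = ∑ k ∈ Finset.range 4, (Nat.choose 3 k / 8 : ℝ) * (exp (-2 * x ^ 2) * erf x ^ k) := by
    simp only [Finset.sum_range_succ, Finset.sum_range_zero]
    norm_num
    ring
  rw [funext hcube, integral_finsetSum _ fun k _ =>
    (integrable_exp_neg_mul_sq_mul_erf_pow two_pos k).const_mul _]
  simp only [Finset.sum_range_succ, Finset.sum_range_zero, integral_const_mul]
  rw [integral_exp_neg_mul_sq_mul_erf_pow_of_odd 2 odd_one,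
    integral_exp_neg_mul_sq_mul_erf_pow_of_odd 2 (by decide : Odd 3),
    integral_exp_neg_mul_sq_mul_erf_sq two_pos]
  simp only [pow_zero, mul_one, integral_gaussian]
  norm_num [Nat.choose, arccos_eq_pi_div_two_sub_arcsin]
  rw [← one_div, arctan_one_div_sqrt_eight]
  have hπ : √π ^ 2 = π := sq_sqrt pi_pos.le
  field_simp
  rw [hπ]
  ring
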